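/- Let σ ∈ M_n(ℂ) be positive definite with trace 1, and ρ a density matrix. Then ‖ρ - σ‖₁ ≤ 2 ‖σ^{-1/4}√ρ σ^{-1/4} - I‖_{L²(σ)}, where ‖X‖_{L²(σ)}² := Tr(σ^{1/2} X* σ^{1/2} X). -/

import Mathlib

open Matrix
open scoped ComplexOrder

/-- Real powers of a Hermitian matrix, via its spectral decomposition. -/
noncomputable def mpow {n : ℕ} {σ : Matrix (Fin n) (Fin n) ℂ} (hσ : σ.IsHermitian)
    (t : ℝ) : Matrix (Fin n) (Fin n) ℂ :=
  (hσ.eigenvectorUnitary : Matrix (Fin n) (Fin n) ℂ) *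
    Matrix.diagonal (fun i => ((hσ.eigenvalues i ^ t : ℝ) : ℂ)) *
    (star hσ.eigenvectorUnitary : Matrix (Fin n) (Fin n) ℂ)

/-- The square root of a positive semidefinite matrix (removed from Mathlib; old definition). -/
noncomputable def Matrix.PosSemidef.sqrt {n : ℕ} {A : Matrix (Fin n) (Fin n) ℂ}
    (hA : A.PosSemidef) : Matrix (Fin n) (Fin n) ℂ :=
  (hA.1.eigenvectorUnitary : Matrix (Fin n) (Fin n) ℂ) *
    Matrix.diagonal ((↑) ∘ (fun x : ℝ => Real.sqrt x) ∘ hA.1.eigenvalues) *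
    (star hA.1.eigenvectorUnitary : Matrix (Fin n) (Fin n) ℂ)

/-- The trace (Schatten-1) norm `‖A‖₁ = Tr √(A* A)`. -/
noncomputable def traceNorm {n : ℕ} (A : Matrix (Fin n) (Fin n) ℂ) : ℝ :=
  ((Matrix.posSemidef_conjTranspose_mul_self A).sqrt.trace).re

/-- The weighted `L²(σ)` (KMS) norm `‖X‖_{L²(σ)} = √(Tr (σ^{1/2} X* σ^{1/2} X))`. -/
noncomputable def l2SigmaNorm {n : ℕ} {σ : Matrix (Fin n) (Fin n) ℂ} (hσ : σ.PosDef)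
    (X : Matrix (Fin n) (Fin n) ℂ) : ℝ :=
  Real.sqrt ((mpow hσ.1 (1/2 : ℝ) * Xᴴ * mpow hσ.1 (1/2 : ℝ) * X).trace.re)

/-!
With `a = √ρ` and `b = √σ` one has `σ^{1/4} (σ^{-1/4} a σ^{-1/4} - 1) σ^{1/4} = a - b`, and
cyclicity of the trace turns the `L²(σ)` norm into the Hilbert–Schmidt norm `‖a - b‖₂`.
For the Hermitian unitary `S = sign(ρ - σ)` we have `‖ρ - σ‖₁ = Re Tr((a² - b²) S)`; writing
`2 (a² - b²) = (a - b)(a + b) + (a + b)(a - b)` and applying Cauchy–Schwarz to the Hilbert–Schmidt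
pairing gives `‖ρ - σ‖₁ ≤ ‖a - b‖₂ ‖a + b‖₂`, and `‖a + b‖₂ ≤ √(Tr ρ) + √(Tr σ) = 2`.
-/

open scoped Matrix.Norms.Frobenius

namespace Matrix

variable {l m 𝕜 : Type*} [Fintype l] [Fintype m] [RCLike 𝕜]

theorem frobenius_norm_sq_eq_sum (A : Matrix l m 𝕜) : ‖A‖ ^ 2 = ∑ i, ∑ j, ‖A i j‖ ^ 2 := by
  rw [frobenius_norm_def, ← Real.rpow_natCast, ← Real.rpow_mul (by positivity)]
  norm_num

theorem frobenius_norm_sq_eq_re_trace (A : Matrix l m 𝕜) :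
    ‖A‖ ^ 2 = RCLike.re (Aᴴ * A).trace := by
  simp only [frobenius_norm_sq_eq_sum, trace, diag, mul_apply, conjTranspose_apply,
    RCLike.star_def, RCLike.conj_mul, map_sum]
  rw [Finset.sum_comm]
  norm_cast

theorem norm_trace_mul_le (A : Matrix l m 𝕜) (B : Matrix m l 𝕜) :
    ‖(A * B).trace‖ ≤ ‖A‖ * ‖B‖ := by
  have hAB : (A * B).trace = ∑ p : l × m, A p.1 p.2 * B p.2 p.1 := by
    simp only [trace, diag, mul_apply, Fintype.sum_prod_type]
  have hA : ‖A‖ = √(∑ p : l × m, ‖A p.1 p.2‖ ^ 2) := by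
    rw [← Real.sqrt_sq (norm_nonneg A), frobenius_norm_sq_eq_sum, Fintype.sum_prod_type]
  have hB : ‖B‖ = √(∑ p : l × m, ‖B p.2 p.1‖ ^ 2) := by
    rw [← frobenius_norm_transpose, ← Real.sqrt_sq (norm_nonneg Bᵀ), frobenius_norm_sq_eq_sum,
      Fintype.sum_prod_type]
    rfl
  rw [hAB, hA, hB]
  calc ‖∑ p : l × m, A p.1 p.2 * B p.2 p.1‖ ≤ ∑ p : l × m, ‖A p.1 p.2‖ * ‖B p.2 p.1‖ := by
        simpa only [norm_mul] using norm_sum_le Finset.univ fun p : l × m => A p.1 p.2 * B p.2 p.1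
    _ ≤ _ := Real.sum_mul_le_sqrt_mul_sqrt _ _ _

theorem re_trace_mul_le (A : Matrix l m 𝕜) (B : Matrix m l 𝕜) :
    RCLike.re (A * B).trace ≤ ‖A‖ * ‖B‖ :=
  (RCLike.re_le_norm _).trans (norm_trace_mul_le A B)

variable [DecidableEq m]

theorem frobenius_norm_mul_unitary (A : Matrix l m 𝕜) {U : Matrix m m 𝕜}
    (hU : U ∈ unitary (Matrix m m 𝕜)) : ‖A * U‖ = ‖A‖ := by
  refine (pow_left_inj₀ (norm_nonneg _) (norm_nonneg _) two_ne_zero).mp ?_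
  rw [frobenius_norm_sq_eq_re_trace, frobenius_norm_sq_eq_re_trace, conjTranspose_mul,
    Matrix.mul_assoc, trace_mul_comm, Matrix.mul_assoc, Matrix.mul_assoc A,
    ← star_eq_conjTranspose, Unitary.mul_star_self_of_mem hU, Matrix.mul_one, trace_mul_comm]

theorem frobenius_norm_unitary_mul (A : Matrix m l 𝕜) {U : Matrix m m 𝕜}
    (hU : U ∈ unitary (Matrix m m 𝕜)) : ‖U * A‖ = ‖A‖ := by
  refine (pow_left_inj₀ (norm_nonneg _) (norm_nonneg _) two_ne_zero).mp ?_
  rw [frobenius_norm_sq_eq_re_trace, frobenius_norm_sq_eq_re_trace, conjTranspose_mul,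
    Matrix.mul_assoc, ← Matrix.mul_assoc Uᴴ, ← star_eq_conjTranspose,
    Unitary.star_mul_self_of_mem hU, Matrix.one_mul]

end Matrix

section
variable {n : ℕ}

theorem Matrix.IsHermitian.eigenvectorUnitary_mul_diagonal_mul_star {A : Matrix (Fin n) (Fin n) ℂ}
    (hA : A.IsHermitian) (f : ℝ → ℝ) :
    (hA.eigenvectorUnitary : Matrix (Fin n) (Fin n) ℂ) *
      Matrix.diagonal (fun i => ((f (hA.eigenvalues i) : ℝ) : ℂ)) *
      (star hA.eigenvectorUnitary : Matrix (Fin n) (Fin n) ℂ) = cfc f A := by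
  rw [hA.cfc_eq, IsHermitian.cfc, Unitary.conjStarAlgAut_apply]
  rfl

theorem mpow_eq_cfc {A : Matrix (Fin n) (Fin n) ℂ} (hA : A.IsHermitian) (t : ℝ) :
    mpow hA t = cfc (fun x : ℝ => x ^ t) A :=
  hA.eigenvectorUnitary_mul_diagonal_mul_star (· ^ t)

theorem Matrix.PosSemidef.sqrt_eq_cfc {A : Matrix (Fin n) (Fin n) ℂ} (hA : A.PosSemidef) :
    hA.sqrt = cfc Real.sqrt A :=
  hA.1.eigenvectorUnitary_mul_diagonal_mul_star Real.sqrt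

theorem mpow_isHermitian {A : Matrix (Fin n) (Fin n) ℂ} (hA : A.IsHermitian) (t : ℝ) :
    (mpow hA t).IsHermitian := by
  rw [mpow_eq_cfc]
  exact cfc_predicate _ A

theorem mpow_zero {A : Matrix (Fin n) (Fin n) ℂ} (hA : A.IsHermitian) : mpow hA 0 = 1 := by
  simp only [mpow_eq_cfc, Real.rpow_zero]
  exact cfc_const_one ℝ A

theorem mpow_add {A : Matrix (Fin n) (Fin n) ℂ} (hA : A.PosDef) (s t : ℝ) :
    mpow hA.1 (s + t) = mpow hA.1 s * mpow hA.1 t := by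
  simp only [mpow_eq_cfc]
  rw [← cfc_mul (hf := A.finite_real_spectrum.continuousOn _)
    (hg := A.finite_real_spectrum.continuousOn _)]
  refine cfc_congr fun x hx => Real.rpow_add ?_ s t
  obtain ⟨i, rfl⟩ := hA.1.spectrum_real_eq_range_eigenvalues ▸ hx
  exact hA.eigenvalues_pos i

theorem Matrix.PosSemidef.isHermitian_sqrt {A : Matrix (Fin n) (Fin n) ℂ} (hA : A.PosSemidef) :
    hA.sqrt.IsHermitian := by
  rw [hA.sqrt_eq_cfc]
  exact cfc_predicate _ A

theorem Matrix.PosSemidef.sqrt_mul_self {A : Matrix (Fin n) (Fin n) ℂ} (hA : A.PosSemidef) :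
    hA.sqrt * hA.sqrt = A := by
  rw [hA.sqrt_eq_cfc, ← cfc_mul (hf := A.finite_real_spectrum.continuousOn _)
    (hg := A.finite_real_spectrum.continuousOn _)]
  conv_rhs => rw [← cfc_id' ℝ A hA.1]
  refine cfc_congr fun x hx => Real.mul_self_sqrt ?_
  obtain ⟨i, rfl⟩ := hA.1.spectrum_real_eq_range_eigenvalues ▸ hx
  exact hA.eigenvalues_nonneg i

theorem mpow_half_eq_sqrt {A : Matrix (Fin n) (Fin n) ℂ} (hA : A.PosSemidef) :
    mpow hA.1 (1/2) = hA.sqrt := by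
  rw [mpow_eq_cfc, hA.sqrt_eq_cfc]
  congr 1
  funext x
  exact (Real.sqrt_eq_rpow x).symm

theorem Matrix.PosSemidef.frobenius_norm_sqrt_eq_one {A : Matrix (Fin n) (Fin n) ℂ}
    (hA : A.PosSemidef) (h : A.trace = 1) : ‖hA.sqrt‖ = 1 := by
  rw [← pow_eq_one_iff_of_nonneg (norm_nonneg _) two_ne_zero, frobenius_norm_sq_eq_re_trace,
    hA.isHermitian_sqrt.eq, hA.sqrt_mul_self, h, RCLike.one_re]

theorem traceNorm_eq_re_trace_cfc_abs {M : Matrix (Fin n) (Fin n) ℂ} (hM : M.IsHermitian) :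
    traceNorm M = (cfc (fun x : ℝ => |x|) M).trace.re := by
  have hMM : Mᴴ * M = cfc (fun x : ℝ => x * x) M := by
    rw [hM.eq, cfc_mul (hf := M.finite_real_spectrum.continuousOn _)
      (hg := M.finite_real_spectrum.continuousOn _), cfc_id' ℝ M]
  have habs : (fun x : ℝ => |x|) = Real.sqrt ∘ fun x : ℝ => x * x := by
    funext x
    exact (Real.sqrt_mul_self_eq_abs x).symm
  rw [traceNorm, Matrix.PosSemidef.sqrt_eq_cfc, hMM, habs, cfc_comp _ _ M]

theorem Matrix.IsHermitian.exists_mem_unitary_traceNorm_eq {M : Matrix (Fin n) (Fin n) ℂ}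
    (hM : M.IsHermitian) :
    ∃ S ∈ unitary (Matrix (Fin n) (Fin n) ℂ), traceNorm M = (M * S).trace.re := by
  -- not `SignType.sign`, which vanishes at `0` and would not make `cfc s M` unitary
  set s : ℝ → ℝ := fun x => if 0 ≤ x then 1 else -1
  have hs : ContinuousOn s (spectrum ℝ M) := M.finite_real_spectrum.continuousOn s
  have hS : (cfc s M) * (cfc s M) = 1 := by
    rw [← cfc_mul (hf := hs) (hg := hs), ← cfc_const_one ℝ M]
    refine cfc_congr fun x _ => ?_
    simp only [s]
    split_ifs <;> norm_num
  refine ⟨cfc s M, ?_, ?_⟩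
  · rw [Matrix.mem_unitaryGroup_iff, (cfc_predicate s M).star_eq, hS]
  · have hMS : M * cfc s M = cfc (fun x => x * s x) M := by
      rw [cfc_mul _ _ M (M.finite_real_spectrum.continuousOn _) hs, cfc_id' ℝ M]
    rw [traceNorm_eq_re_trace_cfc_abs hM, hMS]
    congr 3
    funext x
    simp only [s]
    split_ifs with hx
    · rw [abs_of_nonneg hx, mul_one]
    · rw [abs_of_neg (not_le.mp hx), mul_neg_one]

theorem traceNorm_mul_self_sub_mul_self_le {a b : Matrix (Fin n) (Fin n) ℂ}
    (ha : a.IsHermitian) (hb : b.IsHermitian) :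
    traceNorm (a * a - b * b) ≤ ‖a - b‖ * ‖a + b‖ := by
  have hM : (a * a - b * b).IsHermitian := by
    simp only [IsHermitian, conjTranspose_sub, conjTranspose_mul, ha.eq, hb.eq]
  obtain ⟨S, hS, hnorm⟩ := hM.exists_mem_unitary_traceNorm_eq
  have hsplit : (a * a - b * b) * S + (a * a - b * b) * S =
      (a - b) * ((a + b) * S) + (a + b) * (a - b) * S := by
    noncomm_ring
  have hcycle : ((a + b) * (a - b) * S).trace = ((a - b) * (S * (a + b))).trace := by
    rw [trace_mul_comm, ← Matrix.mul_assoc, trace_mul_comm]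
  have htwice : traceNorm (a * a - b * b) + traceNorm (a * a - b * b) =
      ((a - b) * ((a + b) * S)).trace.re + ((a - b) * (S * (a + b))).trace.re := by
    rw [hnorm, ← Complex.add_re, ← trace_add, hsplit, trace_add, hcycle, Complex.add_re]
  have h₁ := re_trace_mul_le (a - b) ((a + b) * S)
  have h₂ := re_trace_mul_le (a - b) (S * (a + b))
  rw [frobenius_norm_mul_unitary _ hS] at h₁
  rw [frobenius_norm_unitary_mul _ hS] at h₂
  simp only [RCLike.re_to_complex] at h₁ h₂
  linarith

theorem l2SigmaNorm_eq_frobenius_norm {σ : Matrix (Fin n) (Fin n) ℂ} (hσ : σ.PosDef)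
    (X : Matrix (Fin n) (Fin n) ℂ) :
    l2SigmaNorm hσ X = ‖mpow hσ.1 (1/4) * X * mpow hσ.1 (1/4)‖ := by
  set Q := mpow hσ.1 (1/4)
  have hQQ : mpow hσ.1 (1/2) = Q * Q := by rw [← mpow_add hσ]; norm_num
  have hQ : Qᴴ = Q := (mpow_isHermitian hσ.1 _).eq
  clear_value Q
  have hcycle : (Q * Q * Xᴴ * (Q * Q) * X).trace = ((Q * X * Q)ᴴ * (Q * X * Q)).trace := by
    rw [conjTranspose_mul, conjTranspose_mul, hQ,
      show Q * Q * Xᴴ * (Q * Q) * X = Q * (Q * Xᴴ * Q * Q * X) by noncomm_ring, trace_mul_comm]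
    congr 1
    noncomm_ring
  rw [l2SigmaNorm, ← Real.sqrt_sq (norm_nonneg (Q * X * Q)), frobenius_norm_sq_eq_re_trace,
    RCLike.re_to_complex, hQQ, hcycle]

theorem l2SigmaNorm_mpow_conj_sub_one {σ : Matrix (Fin n) (Fin n) ℂ} (hσ : σ.PosDef)
    (A : Matrix (Fin n) (Fin n) ℂ) :
    l2SigmaNorm hσ (mpow hσ.1 (-(1/4)) * A * mpow hσ.1 (-(1/4)) - 1) =
      ‖A - hσ.posSemidef.sqrt‖ := by
  rw [l2SigmaNorm_eq_frobenius_norm]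
  set Q := mpow hσ.1 (1/4)
  set Q' := mpow hσ.1 (-(1/4))
  have hQQ' : Q * Q' = 1 := by rw [← mpow_add hσ]; norm_num [mpow_zero]
  have hQ'Q : Q' * Q = 1 := by rw [← mpow_add hσ]; norm_num [mpow_zero]
  have hQQ : Q * Q = hσ.posSemidef.sqrt := by
    rw [← mpow_half_eq_sqrt, ← mpow_add hσ]; norm_num
  clear_value Q Q'
  congr 1
  calc Q * (Q' * A * Q' - 1) * Q = Q * Q' * A * (Q' * Q) - Q * Q := by noncomm_ring
    _ = A - hσ.posSemidef.sqrt := by rw [hQQ', hQ'Q, hQQ, Matrix.one_mul, Matrix.mul_one]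

end

/-- For a full-rank density matrix `σ` and density matrix `ρ`,
`‖ρ - σ‖₁ ≤ 2 ‖σ^{-1/4} √ρ σ^{-1/4} - I‖_{L²(σ)}`. -/
theorem traceNorm_sub_le_two_mul_l2SigmaNorm {n : ℕ} (σ ρ : Matrix (Fin n) (Fin n) ℂ)
    (hσ : σ.PosDef) (hσtr : σ.trace = 1) (hρ : ρ.PosSemidef) (hρtr : ρ.trace = 1) :
    traceNorm (ρ - σ) ≤
      2 * l2SigmaNorm hσ (mpow hσ.1 (-(1/4) : ℝ) * hρ.sqrt * mpow hσ.1 (-(1/4) : ℝ) - 1) := by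
  set a := hρ.sqrt
  set b := hσ.posSemidef.sqrt
  calc traceNorm (ρ - σ) = traceNorm (a * a - b * b) := by
        rw [hρ.sqrt_mul_self, hσ.posSemidef.sqrt_mul_self]
    _ ≤ ‖a - b‖ * ‖a + b‖ :=
        traceNorm_mul_self_sub_mul_self_le hρ.isHermitian_sqrt hσ.posSemidef.isHermitian_sqrt
    _ ≤ ‖a - b‖ * (‖a‖ + ‖b‖) := by gcongr; exact norm_add_le a b
    _ = 2 * l2SigmaNorm hσ (mpow hσ.1 (-(1/4)) * a * mpow hσ.1 (-(1/4)) - 1) := by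
        rw [hρ.frobenius_norm_sqrt_eq_one hρtr, hσ.posSemidef.frobenius_norm_sqrt_eq_one hσtr,
          l2SigmaNorm_mpow_conj_sub_one]
        ring
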